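/- Let C be the smooth projective curve over 𝔽₂ given by the canonical model V(X²+YZ, XY+ZT+T², YT+ZU+U²) in ℙ⁴ (i.e., b₂ = b₃ = b₈ = 0, b₆ = 1 in equation (3.2) with a₃ = b₉ = b₁₀ = b₁₂ = 0, b₁₁ = 1). Then the numbers of 𝔽_{2ⁿ}-rational points of C for n = 1,…,5 are 5, 9, 11, 17, 25 respectively. -/

import Mathlib

set_option linter.unusedSectionVars false
set_option linter.unusedVariables false


open MvPolynomial

/-- The number of `𝔽_{2ⁿ}`-rational points of the smooth genus-5 curve
`C = V(X² + YZ, XY + ZT + T², YT + ZU + U²) ⊂ ℙ⁴` (variables `X,Y,Z,T,U` indexed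
`0,…,4`), i.e. the number of points of `ℙ⁴(𝔽_{2ⁿ})` on which the three quadrics
vanish. -/
noncomputable def curvePointCount (n : ℕ) : ℕ :=
  Nat.card {P : Projectivization (GaloisField 2 n) (Fin 5 → GaloisField 2 n) //
    MvPolynomial.eval P.rep (X 0 ^ 2 + X 1 * X 2 : MvPolynomial (Fin 5) (GaloisField 2 n)) = 0 ∧
    MvPolynomial.eval P.rep (X 0 * X 1 + X 2 * X 3 + X 3 ^ 2 :
      MvPolynomial (Fin 5) (GaloisField 2 n)) = 0 ∧
    MvPolynomial.eval P.rep (X 1 * X 3 + X 2 * X 4 + X 4 ^ 2 :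
      MvPolynomial (Fin 5) (GaloisField 2 n)) = 0}

/-- Helper field carrier: `Fin (2^n)` with multiplication given by lookup in table `T`. -/
def Fq (n T : ℕ) : Type := Fin (2^n)

namespace Fq

variable {n T : ℕ}

instance : DecidableEq (Fq n T) := instDecidableEqFin _
instance : Fintype (Fq n T) := Fin.fintype _

def mk' (n T a : ℕ) : Fq n T := ⟨a % 2^n, Nat.mod_lt _ (Nat.pow_pos (by norm_num))⟩

section Ops

def zero : Zero (Fq n T) := ⟨mk' n T 0⟩
def one : One (Fq n T) := ⟨mk' n T 1⟩
def add : Add (Fq n T) := ⟨fun a b => mk' n T (a.val ^^^ b.val)⟩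
def neg : Neg (Fq n T) := ⟨id⟩
def mul : Mul (Fq n T) :=
  ⟨fun a b => mk' n T ((T >>> (n * (2^n * a.val + b.val))) &&& (2^n - 1))⟩

attribute [local instance] zero one add neg mul

def pw (a : Fq n T) : ℕ → Fq n T
  | 0 => 1
  | (k+1) => a * pw a k

def inv : Inv (Fq n T) := ⟨fun a => if a = 0 then 0 else pw a (2^n - 2)⟩

attribute [local instance] inv

def ax (n T : ℕ) : Prop :=
  (∀ a b c : Fq n T, a + b + c = a + (b + c)) ∧
  (∀ a b : Fq n T, a + b = b + a) ∧
  (∀ a : Fq n T, 0 + a = a) ∧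
  (∀ a : Fq n T, a + a = 0) ∧
  (∀ a b c : Fq n T, a * b * c = a * (b * c)) ∧
  (∀ a b : Fq n T, a * b = b * a) ∧
  (∀ a : Fq n T, 1 * a = a) ∧
  (∀ a b c : Fq n T, a * (b + c) = a * b + a * c) ∧
  (∀ a : Fq n T, 0 * a = 0) ∧
  (∀ a : Fq n T, a ≠ 0 → a * a⁻¹ = 1) ∧
  ((0 : Fq n T)⁻¹ = 0) ∧ ((0 : Fq n T) ≠ 1)

instance axDecidable (n T : ℕ) : Decidable (ax n T) := inferInstanceAs (Decidable (_ ∧ _))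

def commRing (h : ax n T) : CommRing (Fq n T) where
  add_assoc := h.1
  add_comm := h.2.1
  zero_add := h.2.2.1
  add_zero a := by rw [h.2.1]; exact h.2.2.1 a
  neg_add_cancel a := h.2.2.2.1 a
  mul_assoc := h.2.2.2.2.1
  mul_comm := h.2.2.2.2.2.1
  one_mul := h.2.2.2.2.2.2.1
  mul_one a := by rw [h.2.2.2.2.2.1]; exact h.2.2.2.2.2.2.1 a
  left_distrib := h.2.2.2.2.2.2.2.1
  right_distrib a b c := by
    rw [h.2.2.2.2.2.1, h.2.2.2.2.2.2.2.1, h.2.2.2.2.2.1 c a, h.2.2.2.2.2.1 c b]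
  zero_mul := h.2.2.2.2.2.2.2.2.1
  mul_zero a := by rw [h.2.2.2.2.2.1]; exact h.2.2.2.2.2.2.2.2.1 a
  nsmul := nsmulRec
  zsmul := zsmulRec

def field (h : ax n T) : Field (Fq n T) :=
  letI : CommRing (Fq n T) := commRing h
  { inv := Inv.inv
    div := fun a b => a * b⁻¹
    mul_inv_cancel := fun a ha => h.2.2.2.2.2.2.2.2.2.1 a ha
    inv_zero := h.2.2.2.2.2.2.2.2.2.2.1
    exists_pair_ne := ⟨0, 1, h.2.2.2.2.2.2.2.2.2.2.2⟩
    nnqsmul := _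
    qsmul := _ }

end Ops

end Fq

def T1 : ℕ := 8
def T2 : ℕ := 2625168384
def T3 : ℕ := 2821848294356612419217921029917578219971947684264937521152
def T4 : ℕ := 116196760129267793630862849262464326346044543732748708940920453221664288556434379745879494961270582141731748813355742142288220638766218855867759359510984593843506004200114943278699875244065120512813025380665946106619127097398772031257643617143689515450995722003729973585221105779229319991106539050771048038400
def T5 : ℕ := 1080479032087761823018211772211032424761431165939550601302933045899793796247925151534488420485575080629440461244062296952960669259146067625816894610020857784948699212533089932998718160929854919760451690175594109156412503671374870774742677624751658461920525921680254615955760716646561685513908120302828105471422735757076859920719516304396071967631600039836959861425527618571370028614410915388542898250632461069961115855226122705943878937926046776438062784208660952004294988348751642784539093188588739283613504515420753593895853508468960326372810382131677984103574141907468855912386723965552863149272251044902760042818022756121863105388970128213094669520714740625672915107248442403282317945071789690649976695816752608901715796618618047812879471798683462792169253693727925707698786900618952516336901879347668532495254749529308343318095737259423229421288596145768568961072089644576761104042901235498303619151778334753211433384193708447029558436876823354967287042465404199062217536206763855083419372561568400965447121121632143448874315638466207921432990572941295626897295006585357910136004373450145231037743254412499637241191620346060468981908409428210860176542976424529444182591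32037807734164211605724739782819781353435761009390836216362900777584713462606884327330779408941635095127726452318274311602862610838031905185084111375203469849716078223880040803555184033898903431904408499901976387979014468435507345745772488651003084902781458751948967454175797339287002946443741078296424767125593778879332774650111994871979244289813779477452088152162304

set_option maxRecDepth 1000000 in
set_option maxHeartbeats 16000000 in
theorem ax1 : Fq.ax 1 T1 := by decide +kernel

set_option maxRecDepth 1000000 in
set_option maxHeartbeats 16000000 in
theorem ax2 : Fq.ax 2 T2 := by decide +kernel

set_option maxRecDepth 1000000 in
set_option maxHeartbeats 16000000 in
theorem ax3 : Fq.ax 3 T3 := by decide +kernel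

set_option maxRecDepth 1000000 in
set_option maxHeartbeats 16000000 in
theorem ax4 : Fq.ax 4 T4 := by decide +kernel

set_option maxRecDepth 1000000 in
set_option maxHeartbeats 16000000 in
theorem ax5 : Fq.ax 5 T5 := by decide +kernel

instance : Field (Fq 1 T1) := Fq.field ax1
instance : Field (Fq 2 T2) := Fq.field ax2
instance : Field (Fq 3 T3) := Fq.field ax3
instance : Field (Fq 4 T4) := Fq.field ax4
instance : Field (Fq 5 T5) := Fq.field ax5


open MvPolynomial

section Bijection

variable (K : Type) [Field K] [CharP K 2]

/-- The affine solution predicate. -/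
abbrev solPred {R : Type*} [CommRing R] (p : R × R × R) : Prop :=
  p.2.1 * p.2.1 + p.2.1 = p.1 * (p.1 * p.1) ∧
    p.2.2 * p.2.2 + p.2.2 = p.1 * p.1 * p.2.1

/-- Affine solutions. -/
abbrev Sol (R : Type*) [CommRing R] : Type _ := {p : R × R × R // solPred p}

/-- The vector condition cut out by the three quadrics. -/
def Qv {R : Type*} [CommRing R] (w : Fin 5 → R) : Prop :=
  w 0 * w 0 + w 1 * w 2 = 0 ∧ w 0 * w 1 + w 2 * w 3 + w 3 * w 3 = 0 ∧
    w 1 * w 3 + w 2 * w 4 + w 4 * w 4 = 0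

variable {K}

theorem q_smul (a : Kˣ) (w : Fin 5 → K) (h : Qv w) : Qv (a • w) := by
  obtain ⟨h1, h2, h3⟩ := h
  refine ⟨?_, ?_, ?_⟩ <;>
    simp only [Pi.smul_apply, Units.smul_def, smul_eq_mul]
  · linear_combination ((a : K) * (a : K)) * h1
  · linear_combination ((a : K) * (a : K)) * h2
  · linear_combination ((a : K) * (a : K)) * h3

theorem q_rep_of (w : Fin 5 → K) (hw : w ≠ 0) (h : Qv w) :
    Qv (Projectivization.mk K w hw).rep := by
  obtain ⟨a, ha⟩ := Projectivization.exists_smul_eq_mk_rep K w hw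
  rw [← ha]
  exact q_smul a w h

def vOf (x t u : K) : Fin 5 → K := fun i =>
  match i with
  | ⟨0, _⟩ => x
  | ⟨1, _⟩ => x * x
  | ⟨2, _⟩ => 1
  | ⟨3, _⟩ => t
  | ⟨4, _⟩ => u

theorem vOf_ne (x t u : K) : vOf x t u ≠ 0 := by
  intro h
  exact one_ne_zero (congrFun h 2)

def e1 : Fin 5 → K := fun i => match i with
  | ⟨1, _⟩ => 1
  | _ => 0

theorem e1_ne : (e1 : Fin 5 → K) ≠ 0 := by
  intro h
  exact one_ne_zero (congrFun h 1)

theorem q_e1 : Qv (e1 : Fin 5 → K) := by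
  refine ⟨?_, ?_, ?_⟩ <;> show (_ : K) = 0 <;> ring_nf <;> simp [e1]

theorem q_vOf (x t u : K) (h : solPred (x, t, u)) : Qv (vOf x t u) := by
  obtain ⟨h1, h2⟩ := h
  have h0 : (2 : K) = 0 := CharTwo.two_eq_zero
  refine ⟨?_, ?_, ?_⟩ <;> show (_ : K) = 0
  · show x * x + (x * x) * 1 = 0
    linear_combination (x * x) * h0
  · show x * (x * x) + 1 * t + t * t = 0
    linear_combination h1 + (x * (x * x)) * h0
  · show (x * x) * t + 1 * u + u * u = 0
    linear_combination h2 + (x * x * t) * h0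

/-- Backward map of the bijection. -/
noncomputable def g (o : Option (Sol K)) :
    {P : Projectivization K (Fin 5 → K) // Qv P.rep} :=
  match o with
  | none => ⟨Projectivization.mk K e1 e1_ne, q_rep_of _ _ q_e1⟩
  | some ⟨(x, t, u), h⟩ =>
      ⟨Projectivization.mk K (vOf x t u) (vOf_ne x t u),
        q_rep_of _ _ (q_vOf x t u h)⟩

theorem g_injective : Function.Injective (g (K := K)) := by
  intro o1 o2 h
  have h' := congrArg Subtype.val h
  match o1, o2 with
  | none, none => rfl
  | none, some ⟨(x, t, u), hs⟩ =>
      exfalso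
      simp only [g] at h'
      rw [Projectivization.mk_eq_mk_iff] at h'
      obtain ⟨a, ha⟩ := h'
      have := congrFun ha 2
      simp only [Pi.smul_apply, Units.smul_def, smul_eq_mul] at this
      have h2 : (a : K) * 1 = 0 := this
      rw [mul_one] at h2
      exact a.ne_zero h2
  | some ⟨(x, t, u), hs⟩, none =>
      exfalso
      simp only [g] at h'
      rw [Projectivization.mk_eq_mk_iff] at h'
      obtain ⟨a, ha⟩ := h'
      have := congrFun ha 2
      simp only [Pi.smul_apply, Units.smul_def, smul_eq_mul] at this
      have h2 : (a : K) * 0 = 1 := this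
      rw [mul_zero] at h2
      exact one_ne_zero h2.symm
  | some ⟨(x, t, u), hs⟩, some ⟨(x', t', u'), hs'⟩ =>
      simp only [g] at h'
      rw [Projectivization.mk_eq_mk_iff] at h'
      obtain ⟨a, ha⟩ := h'
      have e2 := congrFun ha 2
      simp only [Pi.smul_apply, Units.smul_def, smul_eq_mul] at e2
      have ha2 : (a : K) = 1 := by
        have : (a : K) * 1 = 1 := e2
        rwa [mul_one] at this
      have e0 := congrFun ha 0
      have e3 := congrFun ha 3
      have e4 := congrFun ha 4
      simp only [Pi.smul_apply, Units.smul_def, smul_eq_mul, ha2, one_mul] at e0 e3 e4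
      have hx : x' = x := e0
      have ht : t' = t := e3
      have hu : u' = u := e4
      subst hx; subst ht; subst hu
      rfl

theorem g_surjective : Function.Surjective (g (K := K)) := by
  rintro ⟨P, hP⟩
  obtain ⟨h1, h2, h3⟩ := hP
  by_cases hz : P.rep 2 = 0
  · -- the point at infinity
    rw [hz, mul_zero, add_zero] at h1
    have h0 : P.rep 0 = 0 := mul_self_eq_zero.mp h1
    rw [hz, zero_mul, h0, zero_mul, zero_add, zero_add] at h2
    have ht : P.rep 3 = 0 := mul_self_eq_zero.mp h2
    rw [hz, zero_mul, ht, mul_zero, zero_add, zero_add] at h3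
    have hu : P.rep 4 = 0 := mul_self_eq_zero.mp h3
    have h1ne : P.rep 1 ≠ 0 := by
      intro hb
      apply P.rep_nonzero
      funext i
      fin_cases i <;> simp_all
    refine ⟨none, ?_⟩
    apply Subtype.ext
    show Projectivization.mk K e1 e1_ne = P
    conv_rhs => rw [← Projectivization.mk_rep P]
    rw [Projectivization.mk_eq_mk_iff]
    refine ⟨Units.mk0 (P.rep 1)⁻¹ (inv_ne_zero h1ne), ?_⟩
    funext i
    fin_cases i <;>
      simp [e1, Pi.smul_apply, Units.smul_def, h0, hz, ht, hu, inv_mul_cancel₀ h1ne] <;> rfl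
  · -- affine points
    set a : Kˣ := Units.mk0 (P.rep 2) hz with ha
    set w : Fin 5 → K := a⁻¹ • P.rep with hwdef
    have hQw : Qv w := q_smul a⁻¹ P.rep ⟨h1, h2, h3⟩
    have hw2 : w 2 = 1 := by
      show (a⁻¹ : Kˣ) • P.rep 2 = 1
      simp [Units.smul_def, ha, inv_mul_cancel₀ hz]
    have h0 : (2 : K) = 0 := CharTwo.two_eq_zero
    obtain ⟨q1, q2, q3⟩ := hQw
    rw [hw2] at q1 q2 q3
    have hw1 : w 1 = w 0 * w 0 := by linear_combination q1 - (w 0 * w 0) * h0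
    refine ⟨some ⟨(w 0, w 3, w 4), ?_, ?_⟩, ?_⟩
    · show w 3 * w 3 + w 3 = w 0 * (w 0 * w 0)
      rw [hw1] at q2
      linear_combination q2 - (w 0 * (w 0 * w 0)) * h0
    · show w 4 * w 4 + w 4 = w 0 * w 0 * w 3
      rw [hw1] at q3
      linear_combination q3 - (w 0 * w 0 * w 3) * h0
    · apply Subtype.ext
      show Projectivization.mk K (vOf (w 0) (w 3) (w 4)) _ = P
      have hv : vOf (w 0) (w 3) (w 4) = w := by
        funext i
        fin_cases i
        · rfl
        · exact hw1.symm
        · exact hw2.symm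
        · rfl
        · rfl
      conv_rhs => rw [← Projectivization.mk_rep P]
      rw [Projectivization.mk_eq_mk_iff]
      exact ⟨a⁻¹, by rw [← hv] at hwdef; exact hwdef.symm⟩

theorem count_eq (K : Type) [Field K] [CharP K 2] [Finite K] :
    Nat.card {P : Projectivization K (Fin 5 → K) //
      MvPolynomial.eval P.rep (X 0 ^ 2 + X 1 * X 2 : MvPolynomial (Fin 5) K) = 0 ∧
      MvPolynomial.eval P.rep (X 0 * X 1 + X 2 * X 3 + X 3 ^ 2 :
        MvPolynomial (Fin 5) K) = 0 ∧
      MvPolynomial.eval P.rep (X 1 * X 3 + X 2 * X 4 + X 4 ^ 2 :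
        MvPolynomial (Fin 5) K) = 0} = Nat.card (Sol K) + 1 := by
  have hiff : ∀ P : Projectivization K (Fin 5 → K),
      (MvPolynomial.eval P.rep (X 0 ^ 2 + X 1 * X 2 : MvPolynomial (Fin 5) K) = 0 ∧
      MvPolynomial.eval P.rep (X 0 * X 1 + X 2 * X 3 + X 3 ^ 2 :
        MvPolynomial (Fin 5) K) = 0 ∧
      MvPolynomial.eval P.rep (X 1 * X 3 + X 2 * X 4 + X 4 ^ 2 :
        MvPolynomial (Fin 5) K) = 0) ↔ Qv P.rep := by
    intro P
    simp only [Qv, map_add, map_mul, map_pow, eval_X, pow_two]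
  rw [Nat.card_congr (Equiv.subtypeEquivRight hiff)]
  rw [← Nat.card_congr (Equiv.ofBijective (g (K := K)) ⟨g_injective, g_surjective⟩)]
  rw [Finite.card_option]

end Bijection


theorem solPred_map {K L : Type} [CommRing K] [CommRing L] (e : K ≃+* L) (x t u : K) :
    solPred (x, t, u) ↔ solPred (e x, e t, e u) := by
  constructor
  · rintro ⟨h1, h2⟩
    constructor
    · simpa only [map_add, map_mul] using congrArg e h1
    · simpa only [map_add, map_mul] using congrArg e h2
  · rintro ⟨h1, h2⟩
    constructor
    · apply e.injective
      simpa only [map_add, map_mul] using h1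
    · apply e.injective
      simpa only [map_add, map_mul] using h2

theorem card_sol_eq {K L : Type} [CommRing K] [CommRing L] (e : K ≃+* L) :
    Nat.card (Sol K) = Nat.card (Sol L) := by
  apply Nat.card_congr
  refine Equiv.subtypeEquiv (e.toEquiv.prodCongr (e.toEquiv.prodCongr e.toEquiv)) ?_
  rintro ⟨x, t, u⟩
  show solPred (x, t, u) ↔ solPred (e x, e t, e u)
  exact solPred_map e x t u

theorem curve_count (n T c : ℕ) (hn : n ≠ 0) [Field (Fq n T)]
    (hcard : Nat.card (Fq n T) = 2 ^ n)
    (hc : Nat.card (Sol (Fq n T)) = c) :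
    curvePointCount n = c + 1 := by
  have h1 : curvePointCount n = Nat.card (Sol (GaloisField 2 n)) + 1 :=
    count_eq (GaloisField 2 n)
  haveI : Fintype (GaloisField 2 n) := Fintype.ofFinite _
  haveI : Fintype (Fq n T) := inferInstance
  have hc2 : Fintype.card (GaloisField 2 n) = Fintype.card (Fq n T) := by
    rw [← Nat.card_eq_fintype_card, ← Nat.card_eq_fintype_card,
      GaloisField.card 2 n hn, hcard]
  have e := FiniteField.ringEquivOfCardEq (K := GaloisField 2 n) (K' := Fq n T) hc2
  rw [h1, card_sol_eq e, hc]

theorem cnt1 : curvePointCount 1 = 5 := by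
  have h := curve_count 1 T1 4 (by norm_num)
    (by rw [Nat.card_eq_fintype_card]; exact Fintype.card_fin _)
    (by rw [Nat.card_eq_fintype_card]; decide +kernel)
  omega

theorem cnt2 : curvePointCount 2 = 9 := by
  have h := curve_count 2 T2 8 (by norm_num)
    (by rw [Nat.card_eq_fintype_card]; exact Fintype.card_fin _)
    (by rw [Nat.card_eq_fintype_card]; decide +kernel)
  omega

theorem cnt3 : curvePointCount 3 = 11 := by
  have h := curve_count 3 T3 10 (by norm_num)
    (by rw [Nat.card_eq_fintype_card]; exact Fintype.card_fin _)
    (by rw [Nat.card_eq_fintype_card]; decide +kernel)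
  omega

set_option maxRecDepth 1000000 in
set_option maxHeartbeats 16000000 in
theorem cnt4 : curvePointCount 4 = 17 := by
  have h := curve_count 4 T4 16 (by norm_num)
    (by rw [Nat.card_eq_fintype_card]; exact Fintype.card_fin _)
    (by rw [Nat.card_eq_fintype_card]; decide +kernel)
  omega

set_option maxRecDepth 1000000 in
set_option maxHeartbeats 16000000 in
theorem cnt5 : curvePointCount 5 = 25 := by
  have h := curve_count 5 T5 24 (by norm_num)
    (by rw [Nat.card_eq_fintype_card]; exact Fintype.card_fin _)
    (by rw [Nat.card_eq_fintype_card]; decide +kernel)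
  omega

/-- The numbers of `𝔽_{2ⁿ}`-rational points of
`C = V(X² + YZ, XY + ZT + T², YT + ZU + U²) ⊂ ℙ⁴` for `n = 1,…,5` are
`5, 9, 11, 17, 25` respectively. -/
theorem stmt_14 :
    curvePointCount 1 = 5 ∧ curvePointCount 2 = 9 ∧ curvePointCount 3 = 11 ∧
      curvePointCount 4 = 17 ∧ curvePointCount 5 = 25 := by
  exact ⟨cnt1, cnt2, cnt3, cnt4, cnt5⟩
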